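/- Let λ_1, …, λ_n be pairwise distinct reals, L = diag(λ_1, …, λ_n), and J_V the Jacobian of the map q_i = (-1)^i σ_i(λ). Then the similarity transform L(q) = J_V L J_V^{-1} is the companion matrix with entries L(q)^i_j = -δ_j^1 q_i + δ_j^{i+1}, i.e., L(q) has -q_1, …, -q_n in its first column, ones on the superdiagonal, and zeros elsewhere. -/

import Mathlib

/-- The `i`-th elementary symmetric polynomial `σ_i(λ₁,…,λ_n)`. -/
noncomputable def esymmF (n i : ℕ) (l : Fin n → ℝ) : ℝ :=
  ∑ s ∈ Finset.powersetCard i Finset.univ, ∏ j ∈ s, l j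

/-- `ρ_i = (-1)^i σ_i(λ)`. -/
noncomputable def rho (n i : ℕ) (l : Fin n → ℝ) : ℝ :=
  (-1) ^ i * esymmF n i l

/-- Partial derivative `∂f/∂λ_j` evaluated at `l`. -/
noncomputable def pd (n : ℕ) (f : (Fin n → ℝ) → ℝ) (l : Fin n → ℝ) (j : Fin n) : ℝ :=
  deriv (fun t => f (Function.update l j t)) (l j)

/-- `Δ_j = ∏_{k≠j} (λ_j - λ_k)`. -/
noncomputable def Delta (n : ℕ) (l : Fin n → ℝ) (j : Fin n) : ℝ :=
  ∏ k ∈ Finset.univ.erase j, (l j - l k)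

/-- `Ek n l k i = e_i` of the variables `l` with `l k` removed. -/
noncomputable def Ek (n : ℕ) (l : Fin n → ℝ) (k : Fin n) (i : ℕ) : ℝ :=
  ∑ s ∈ (Finset.univ.erase k).powersetCard i, ∏ j ∈ s, l j

lemma Ek_zero (n : ℕ) (l : Fin n → ℝ) (k : Fin n) : Ek n l k 0 = 1 := by
  simp [Ek]

lemma Ek_top (n : ℕ) (l : Fin n → ℝ) (k : Fin n) : Ek n l k n = 0 := by
  have h : ((Finset.univ : Finset (Fin n)).erase k).card < n := by
    rw [Finset.card_erase_of_mem (Finset.mem_univ k), Finset.card_univ, Fintype.card_fin]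
    have := k.pos
    omega
  rw [Ek, Finset.powersetCard_eq_empty.2 h, Finset.sum_empty]

lemma esymmF_update (n : ℕ) (l : Fin n → ℝ) (j : Fin n) (i : ℕ) (t : ℝ) :
    esymmF n (i+1) (Function.update l j t) = t * Ek n l j i + Ek n l j (i+1) := by
  classical
  have hj : j ∉ (Finset.univ : Finset (Fin n)).erase j := Finset.notMem_erase _ _
  have huniv : (Finset.univ : Finset (Fin n)) = insert j (Finset.univ.erase j) :=
    (Finset.insert_erase (Finset.mem_univ j)).symm
  have hdisj : Disjoint ((Finset.univ.erase j).powersetCard (i+1))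
      (((Finset.univ.erase j).powersetCard i).image (insert j)) := by
    rw [Finset.disjoint_left]
    rintro s hs hs'
    obtain ⟨u, hu, rfl⟩ := Finset.mem_image.1 hs'
    have := Finset.mem_powersetCard.1 hs |>.1
    exact hj (this (Finset.mem_insert_self j u))
  rw [esymmF]
  conv_lhs => rw [huniv]
  rw [Finset.powersetCard_succ_insert hj, Finset.sum_union hdisj]
  have h1 : ∑ s ∈ (Finset.univ.erase j).powersetCard (i+1), ∏ m ∈ s, Function.update l j t m
      = Ek n l j (i+1) := by
    apply Finset.sum_congr rfl
    intro s hs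
    apply Finset.prod_congr rfl
    intro m hm
    have : m ≠ j := fun h => hj (h ▸ (Finset.mem_powersetCard.1 hs).1 hm)
    simp [Function.update_of_ne this]
  have h2 : ∑ s ∈ ((Finset.univ.erase j).powersetCard i).image (insert j),
      ∏ m ∈ s, Function.update l j t m = t * Ek n l j i := by
    rw [Finset.sum_image]
    · rw [Ek, Finset.mul_sum]
      apply Finset.sum_congr rfl
      intro s hs
      have hjs : j ∉ s := fun h => hj ((Finset.mem_powersetCard.1 hs).1 h)
      rw [Finset.prod_insert hjs, Function.update_self]
      congr 1
      apply Finset.prod_congr rfl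
      intro m hm
      exact Function.update_of_ne (fun h => hjs (by rw [← h]; exact hm)) _ _
    · intro s hs u hu h
      have hjs : j ∉ s := fun hh => hj ((Finset.mem_powersetCard.1 hs).1 hh)
      have hju : j ∉ u := fun hh => hj ((Finset.mem_powersetCard.1 hu).1 hh)
      rw [← Finset.erase_insert hjs, ← Finset.erase_insert hju, h]
  rw [h1, h2, add_comm]

lemma pd_rho (n : ℕ) (l : Fin n → ℝ) (i : ℕ) (j : Fin n) :
    pd n (rho n (i+1)) l j = (-1)^(i+1) * Ek n l j i := by
  unfold pd rho
  have heq : (fun t => (-1:ℝ)^(i+1) * esymmF n (i+1) (Function.update l j t))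
      = fun t => (-1:ℝ)^(i+1) * (t * Ek n l j i + Ek n l j (i+1)) := by
    funext t; rw [esymmF_update]
  rw [heq]
  have h : HasDerivAt (fun t : ℝ => (-1:ℝ)^(i+1) * (t * Ek n l j i + Ek n l j (i+1)))
      ((-1:ℝ)^(i+1) * Ek n l j i) (l j) := by
    have := (((hasDerivAt_id (l j)).mul_const (Ek n l j i)).add_const
        (Ek n l j (i+1))).const_mul ((-1:ℝ)^(i+1))
    simpa using this
  exact h.deriv

lemma Ek_eq_esymm (n : ℕ) (l : Fin n → ℝ) (k : Fin n) (i : ℕ) :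
    ((Finset.univ.erase k).val.map l).esymm i = Ek n l k i :=
  Finset.esymm_map_val l _ i

lemma vieta_eval (n : ℕ) (l : Fin n → ℝ) (k : Fin n) (x : ℝ) :
    ∑ j ∈ Finset.range n, (-1:ℝ)^j * Ek n l k j * x^(n-1-j) =
      ∏ m ∈ Finset.univ.erase k, (x - l m) := by
  classical
  set s : Multiset ℝ := (Finset.univ.erase k).val.map l with hs
  have hcard : Multiset.card s = n - 1 := by
    rw [hs, Multiset.card_map]
    show ((Finset.univ : Finset (Fin n)).erase k).card = n - 1
    rw [Finset.card_erase_of_mem (Finset.mem_univ k), Finset.card_univ, Fintype.card_fin]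
  have hn := k.pos
  have h := congrArg (Polynomial.eval x) (Multiset.prod_X_sub_X_eq_sum_esymm s)
  rw [Polynomial.eval_multiset_prod, Multiset.map_map] at h
  simp only [Function.comp, Polynomial.eval_sub, Polynomial.eval_X, Polynomial.eval_C,
    Polynomial.eval_finset_sum, Polynomial.eval_mul, Polynomial.eval_pow,
    Polynomial.eval_neg, Polynomial.eval_one] at h
  rw [hcard] at h
  have hrange : n - 1 + 1 = n := by omega
  rw [hrange] at h
  have hlhs : (s.map fun t => x - t).prod = ∏ m ∈ Finset.univ.erase k, (x - l m) := by
    rw [hs, Multiset.map_map]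
    rfl
  rw [hlhs] at h
  rw [h]
  apply Finset.sum_congr rfl
  intro j _
  rw [Ek_eq_esymm]
  ring

lemma Delta_ne_zero (n : ℕ) (l : Fin n → ℝ) (hl : Function.Injective l) (i : Fin n) :
    Delta n l i ≠ 0 := by
  rw [Delta]
  apply Finset.prod_ne_zero_iff.2
  intro m hm
  have hmi : m ≠ i := Finset.ne_of_mem_erase hm
  exact sub_ne_zero.2 fun h => hmi (hl h).symm

lemma left_inv_JV (n : ℕ) (l : Fin n → ℝ) (hl : Function.Injective l)
    (JV : Matrix (Fin n) (Fin n) ℝ)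
    (hJV : ∀ i j, JV i j = pd n (rho n ((i : ℕ) + 1)) l j) :
    (Matrix.of fun i j : Fin n => -(l i)^(n-1-(j:ℕ)) / Delta n l i) * JV = 1 := by
  ext i k
  rw [Matrix.mul_apply]
  have hentry : ∀ j : Fin n,
      (Matrix.of fun i j : Fin n => -(l i)^(n-1-(j:ℕ)) / Delta n l i) i j * JV j k
      = (Delta n l i)⁻¹ * ((-1:ℝ)^(j:ℕ) * Ek n l k j * (l i)^(n-1-(j:ℕ))) := by
    intro j
    rw [hJV, pd_rho]
    simp only [Matrix.of_apply]
    rw [div_eq_mul_inv, pow_succ]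
    ring
  rw [Finset.sum_congr rfl (fun j _ => hentry j), ← Finset.mul_sum]
  rw [Fin.sum_univ_eq_sum_range (fun j => (-1:ℝ)^j * Ek n l k j * (l i)^(n-1-j)) n]
  rw [vieta_eval n l k (l i)]
  by_cases hik : i = k
  · subst hik
    rw [Matrix.one_apply_eq]
    exact inv_mul_cancel₀ (Delta_ne_zero n l hl i)
  · rw [Matrix.one_apply_ne hik]
    have hz : ∏ m ∈ Finset.univ.erase k, (l i - l m) = 0 :=
      Finset.prod_eq_zero (Finset.mem_erase.2 ⟨hik, Finset.mem_univ i⟩) (sub_self _)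
    rw [hz, mul_zero]

lemma companion_mul (n : ℕ) (l : Fin n → ℝ)
    (JV : Matrix (Fin n) (Fin n) ℝ)
    (hJV : ∀ i j, JV i j = pd n (rho n ((i : ℕ) + 1)) l j) :
    (Matrix.of (fun i j : Fin n =>
        (if (j : ℕ) = 0 then -(rho n ((i : ℕ) + 1) l) else 0)
          + (if (j : ℕ) = (i : ℕ) + 1 then 1 else 0))) * JV = JV * Matrix.diagonal l := by
  ext i k
  rw [Matrix.mul_apply, Matrix.mul_diagonal]
  have hn := i.pos
  simp only [Matrix.of_apply, add_mul, ite_mul, zero_mul, one_mul]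
  rw [Finset.sum_add_distrib]
  have h1 : (∑ j : Fin n, if (j:ℕ) = 0 then -(rho n ((i:ℕ)+1) l) * JV j k else 0)
      = -(rho n ((i:ℕ)+1) l) * JV ⟨0, hn⟩ k := by
    rw [Finset.sum_eq_single (⟨0, hn⟩ : Fin n)]
    · simp
    · intro b _ hb
      rw [if_neg]
      simpa [Fin.ext_iff] using hb
    · simp
  have h2 : (∑ j : Fin n, if (j:ℕ) = (i:ℕ)+1 then JV j k else 0)
      = if h : (i:ℕ)+1 < n then JV ⟨(i:ℕ)+1, h⟩ k else 0 := by
    by_cases h : (i:ℕ)+1 < n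
    · rw [dif_pos h, Finset.sum_eq_single (⟨(i:ℕ)+1, h⟩ : Fin n)]
      · simp
      · intro b _ hb
        rw [if_neg]
        simpa [Fin.ext_iff] using hb
      · simp
    · rw [dif_neg h]
      apply Finset.sum_eq_zero
      intro b _
      rw [if_neg]
      intro hb
      exact h (hb ▸ b.isLt)
  rw [h1, h2]
  have key : esymmF n ((i:ℕ)+1) l = l k * Ek n l k (i:ℕ) + Ek n l k ((i:ℕ)+1) := by
    conv_lhs => rw [← Function.update_eq_self k l]
    exact esymmF_update n l k (i:ℕ) (l k)
  rw [hJV i k, hJV ⟨0, hn⟩ k]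
  simp only [Fin.val_mk, pd_rho, Ek_zero]
  by_cases h : (i:ℕ)+1 < n
  · rw [dif_pos h, hJV ⟨(i:ℕ)+1, h⟩ k]
    simp only [Fin.val_mk, pd_rho]
    rw [rho, key]
    ring
  · rw [dif_neg h]
    have hi : (i:ℕ)+1 = n := by have := i.isLt; omega
    rw [rho, key, hi, Ek_top]
    ring

theorem conformal_killing_tensor_in_viete (n : ℕ) (l : Fin n → ℝ)
    (hl : Function.Injective l)
    (JV : Matrix (Fin n) (Fin n) ℝ)
    (hJV : ∀ i j, JV i j = pd n (rho n ((i : ℕ) + 1)) l j) :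
    JV * Matrix.diagonal l * JV⁻¹ =
      Matrix.of (fun i j : Fin n =>
        (if (j : ℕ) = 0 then -(rho n ((i : ℕ) + 1) l) else 0)
          + (if (j : ℕ) = (i : ℕ) + 1 then 1 else 0)) := by
  rcases Nat.eq_zero_or_pos n with hn | hn
  · subst hn
    ext i j
    exact i.elim0
  have hleft := left_inv_JV n l hl JV hJV
  have hdet : IsUnit JV.det := Matrix.isUnit_det_of_left_inverse hleft
  have hinv : JV * JV⁻¹ = 1 := Matrix.mul_nonsing_inv JV hdet
  rw [← companion_mul n l JV hJV, Matrix.mul_assoc, hinv, Matrix.mul_one]
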